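/- Let 1 ≤ p < ∞, let X₁, …, Xₙ, Y be real Banach spaces, and let T : X₁ × ⋯ × Xₙ → Y be a continuous n-linear operator that is Lipschitz p-summing with constant c. Fix a proper subset S = {i₁, …, i_l} of {1, …, n} and points x⁰_{i_j} ∈ X_{i_j} for j = 1, …, l. Then the (n − l)-linear operator T' obtained from T by fixing the iⱼ-th argument equal to x⁰_{i_j} for each j (and letting the remaining arguments vary) is Lipschitz p-summing with constant ‖x⁰_{i₁}‖ ⋯ ‖x⁰_{i_l}‖ · c; in particular π_p^{Lip}(T') ≤ ‖x⁰_{i₁}‖ ⋯ ‖x⁰_{i_l}‖ · π_p^{Lip}(T). -/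
import Mathlib


open scoped BigOperators

/-- `T` is Lipschitz `p`-summing with constant `c` (general finite index set). -/
def LipschitzPSumming {ι : Type*} [Fintype ι] {X : ι → Type*} [∀ i, NormedAddCommGroup (X i)]
    [∀ i, NormedSpace ℝ (X i)] {Y : Type*} [NormedAddCommGroup Y] [NormedSpace ℝ Y]
    (p c : ℝ) (T : ContinuousMultilinearMap ℝ X Y) : Prop :=
  ∀ (k : ℕ) (u v : Fin k → ((i : ι) → X i)),
    (∑ i, ‖T (u i) - T (v i)‖ ^ p) ^ (1 / p) ≤
      c * ⨆ φ : {φ : ContinuousMultilinearMap ℝ X ℝ // ‖φ‖ ≤ 1},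
        (∑ i, |φ.1 (u i) - φ.1 (v i)| ^ p) ^ (1 / p)

/-- The Lipschitz `p`-summing norm `π_p^{Lip}(T)`. -/
noncomputable def lipschitzPSummingNorm {ι : Type*} [Fintype ι] {X : ι → Type*}
    [∀ i, NormedAddCommGroup (X i)] [∀ i, NormedSpace ℝ (X i)]
    {Y : Type*} [NormedAddCommGroup Y] [NormedSpace ℝ Y]
    (p : ℝ) (T : ContinuousMultilinearMap ℝ X Y) : ℝ :=
  sInf {c : ℝ | 0 ≤ c ∧ LipschitzPSumming p c T}

private lemma lps_bddAbove {ι : Type*} [Fintype ι] {X : ι → Type*} [∀ i, NormedAddCommGroup (X i)]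
    [∀ i, NormedSpace ℝ (X i)] (p : ℝ) (hp : 1 ≤ p) (k : ℕ) (u v : Fin k → ((i : ι) → X i)) :
    BddAbove (Set.range fun φ : {φ : ContinuousMultilinearMap ℝ X ℝ // ‖φ‖ ≤ 1} =>
      (∑ m, |φ.1 (u m) - φ.1 (v m)| ^ p) ^ (1 / p)) := by
  have hp0 : (0:ℝ) < p := lt_of_lt_of_le one_pos hp
  refine ⟨(∑ m, ((∏ i, ‖u m i‖) + ∏ i, ‖v m i‖) ^ p) ^ (1/p), ?_⟩
  rintro x ⟨φ, rfl⟩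
  apply Real.rpow_le_rpow (by positivity) _ (by positivity)
  apply Finset.sum_le_sum
  intro m _
  apply Real.rpow_le_rpow (abs_nonneg _) _ hp0.le
  calc |φ.1 (u m) - φ.1 (v m)| ≤ |φ.1 (u m)| + |φ.1 (v m)| := abs_sub _ _
    _ ≤ (∏ i, ‖u m i‖) + ∏ i, ‖v m i‖ := by
        gcongr
        · have := φ.1.le_opNorm (u m)
          calc |φ.1 (u m)| = ‖φ.1 (u m)‖ := rfl
            _ ≤ ‖φ.1‖ * ∏ i, ‖u m i‖ := φ.1.le_opNorm (u m)
            _ ≤ 1 * ∏ i, ‖u m i‖ := by gcongr; exact φ.2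
            _ = ∏ i, ‖u m i‖ := one_mul _
        · calc |φ.1 (v m)| = ‖φ.1 (v m)‖ := rfl
            _ ≤ ‖φ.1‖ * ∏ i, ‖v m i‖ := φ.1.le_opNorm (v m)
            _ ≤ 1 * ∏ i, ‖v m i‖ := by gcongr; exact φ.2
            _ = ∏ i, ‖v m i‖ := one_mul _

set_option maxHeartbeats 1000000 in
private lemma lps_key {n : ℕ} {X : Fin n → Type*}
    [∀ i, NormedAddCommGroup (X i)] [∀ i, NormedSpace ℝ (X i)]
    {Y : Type*} [NormedAddCommGroup Y] [NormedSpace ℝ Y]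
    (p : ℝ) (hp : 1 ≤ p) (c : ℝ) (hc : 0 ≤ c)
    (T : ContinuousMultilinearMap ℝ X Y) (hT : LipschitzPSumming p c T)
    (S : Finset (Fin n)) (x0 : (i : Fin n) → X i)
    (T' : ContinuousMultilinearMap ℝ (fun j : {i : Fin n // i ∉ S} => X j.1) Y)
    (hT' : ∀ w : (j : {i : Fin n // i ∉ S}) → X j.1,
      T' w = T (fun i => if h : i ∈ S then x0 i else w ⟨i, h⟩)) :
    LipschitzPSumming p ((∏ i ∈ S, ‖x0 i‖) * c) T' := by
  have hp0 : (0:ℝ) < p := lt_of_lt_of_le one_pos hp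
  set P : ℝ := ∏ i ∈ S, ‖x0 i‖ with hPdef
  have hP : 0 ≤ P := Finset.prod_nonneg fun i _ => norm_nonneg _
  intro k u v
  -- extend points
  set G : ((j : {i : Fin n // i ∉ S}) → X j.1) → ((i : Fin n) → X i) :=
    fun w i => if h : i ∈ S then x0 i else w ⟨i, h⟩ with hG
  -- the target supremum
  set Sψ : ℝ := ⨆ ψ : {ψ : ContinuousMultilinearMap ℝ (fun j : {i : Fin n // i ∉ S} => X j.1) ℝ // ‖ψ‖ ≤ 1},
      (∑ m, |ψ.1 (u m) - ψ.1 (v m)| ^ p) ^ (1 / p) with hSψ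
  have hSψ0 : 0 ≤ Sψ := Real.iSup_nonneg fun ψ => by positivity
  have key : ∀ φ : {φ : ContinuousMultilinearMap ℝ X ℝ // ‖φ‖ ≤ 1},
      (∑ m, |φ.1 (G ∘ u <| m) - φ.1 (G ∘ v <| m)| ^ p) ^ (1 / p) ≤ P * Sψ := by
    intro φ
    classical
    -- restriction of φ
    set ψ₀ : MultilinearMap ℝ (fun j : {i : Fin n // i ∉ S} => X j.1) ℝ :=
      φ.1.toMultilinearMap.domDomRestrict (fun i => i ∉ S)
        (fun i : {a : Fin n // ¬ a ∉ S} => x0 i.1) with hψ₀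
    have hψ₀app : ∀ w, ψ₀ w = φ.1 (G w) := by
      intro w
      rw [hψ₀, MultilinearMap.domDomRestrict_apply, ContinuousMultilinearMap.coe_coe]
      congr 1
      funext i
      by_cases h : i ∈ S <;> simp [hG, h]
    have hbound : ∀ w, ‖ψ₀ w‖ ≤ (‖φ.1‖ * P) * ∏ j, ‖w j‖ := by
      intro w
      rw [hψ₀app]
      calc ‖φ.1 (G w)‖ ≤ ‖φ.1‖ * ∏ i, ‖G w i‖ := φ.1.le_opNorm _
        _ = (‖φ.1‖ * P) * ∏ j, ‖w j‖ := by
            rw [mul_assoc]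
            congr 1
            rw [← Finset.prod_mul_prod_compl S (fun i => ‖G w i‖)]
            congr 1
            · apply Finset.prod_congr rfl
              intro i hi; simp [hG, hi]
            · rw [Finset.prod_subtype Sᶜ (fun i => Finset.mem_compl) (fun i => ‖G w i‖)]
              apply Finset.prod_congr rfl
              intro j _
              simp [hG, j.2]
    obtain ⟨ψ, hψapp, hψnorm⟩ : ∃ ψ : ContinuousMultilinearMap ℝ
        (fun j : {i : Fin n // i ∉ S} => X j.1) ℝ,
        (∀ w, ψ w = φ.1 (G w)) ∧ ‖ψ‖ ≤ ‖φ.1‖ * P :=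
      ⟨ψ₀.mkContinuous (‖φ.1‖ * P) hbound, fun w => hψ₀app w,
        ψ₀.mkContinuous_norm_le (by positivity) hbound⟩
    rcases eq_or_lt_of_le hP with hP0 | hP0
    · -- P = 0 : everything vanishes
      have hz : ∀ w, ψ w = 0 := by
        intro w
        have h1 : ‖ψ w‖ ≤ (‖φ.1‖ * P) * ∏ j, ‖w j‖ := ψ.le_of_opNorm_le hψnorm w
        have : (‖φ.1‖ * P) * ∏ j, ‖w j‖ = 0 := by rw [← hP0]; ring
        have := h1.trans_eq this
        simpa using le_antisymm this (norm_nonneg _)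
      have : ∀ m : Fin k, |φ.1 (G ∘ u <| m) - φ.1 (G ∘ v <| m)| ^ p = 0 := by
        intro m
        rw [show φ.1 (G ∘ u <| m) = ψ (u m) from (hψapp (u m)).symm,
          show φ.1 (G ∘ v <| m) = ψ (v m) from (hψapp (v m)).symm, hz, hz]
        simp [Real.zero_rpow hp0.ne']
      have hsum : (∑ m, |φ.1 (G ∘ u <| m) - φ.1 (G ∘ v <| m)| ^ p) = 0 :=
        Finset.sum_eq_zero fun m _ => this m
      rw [hsum, Real.zero_rpow (by positivity : (1:ℝ)/p ≠ 0)]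
      exact mul_nonneg hP hSψ0
    · -- P > 0 : rescale
      have hψ'norm : ‖P⁻¹ • ψ‖ ≤ 1 := by
        calc ‖P⁻¹ • ψ‖ ≤ ‖(P⁻¹ : ℝ)‖ * ‖ψ‖ := ψ.opNorm_smul_le P⁻¹
          _ ≤ P⁻¹ * (‖φ.1‖ * P) := by
              rw [Real.norm_eq_abs, abs_of_nonneg (by positivity)]
              gcongr
          _ = ‖φ.1‖ := by field_simp
          _ ≤ 1 := φ.2
      have happ' : ∀ m, |φ.1 (G ∘ u <| m) - φ.1 (G ∘ v <| m)| = P * |(P⁻¹ • ψ) (u m) - (P⁻¹ • ψ) (v m)| := by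
        intro m
        have h1 : φ.1 (G ∘ u <| m) = ψ (u m) := (hψapp (u m)).symm
        have h2 : φ.1 (G ∘ v <| m) = ψ (v m) := (hψapp (v m)).symm
        have h3 : (P⁻¹ • ψ) (u m) = P⁻¹ * ψ (u m) := rfl
        have h4 : (P⁻¹ • ψ) (v m) = P⁻¹ * ψ (v m) := rfl
        rw [h1, h2]
        rw [h3, h4, ← mul_sub, abs_mul,
          abs_of_nonneg (by positivity : (0:ℝ) ≤ P⁻¹), ← mul_assoc]
        field_simp
      calc (∑ m, |φ.1 (G ∘ u <| m) - φ.1 (G ∘ v <| m)| ^ p) ^ (1/p)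
          = (∑ m, (P ^ p) * |(P⁻¹ • ψ) (u m) - (P⁻¹ • ψ) (v m)| ^ p) ^ (1/p) := by
            congr 1
            apply Finset.sum_congr rfl
            intro m _
            rw [happ' m, Real.mul_rpow hP (abs_nonneg _)]
        _ = ((P ^ p) * ∑ m, |(P⁻¹ • ψ) (u m) - (P⁻¹ • ψ) (v m)| ^ p) ^ (1/p) := by
            rw [Finset.mul_sum]
        _ = P * (∑ m, |(P⁻¹ • ψ) (u m) - (P⁻¹ • ψ) (v m)| ^ p) ^ (1/p) := by
            rw [Real.mul_rpow (by positivity) (by positivity), one_div,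
              Real.rpow_rpow_inv hP hp0.ne']
        _ ≤ P * Sψ := by
            gcongr
            exact le_ciSup (lps_bddAbove p hp k u v) ⟨P⁻¹ • ψ, hψ'norm⟩
  -- assemble
  have h1 : (∑ m, ‖T' (u m) - T' (v m)‖ ^ p) ^ (1/p)
      = (∑ m, ‖T (G ∘ u <| m) - T (G ∘ v <| m)‖ ^ p) ^ (1/p) := by
    congr 1
    apply Finset.sum_congr rfl
    intro m _
    rw [hT' (u m), hT' (v m)]
    rfl
  rw [h1]
  calc (∑ m, ‖T (G ∘ u <| m) - T (G ∘ v <| m)‖ ^ p) ^ (1/p)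
      ≤ c * ⨆ φ : {φ : ContinuousMultilinearMap ℝ X ℝ // ‖φ‖ ≤ 1},
          (∑ m, |φ.1 (G ∘ u <| m) - φ.1 (G ∘ v <| m)| ^ p) ^ (1/p) := hT k (G ∘ u) (G ∘ v)
    _ ≤ c * (P * Sψ) := by
        gcongr
        exact Real.iSup_le key (by positivity)
    _ = (P * c) * Sψ := by ring

/-- Fixing some of the variables of a Lipschitz `p`-summing multilinear operator at
points `x⁰ᵢ`, `i ∈ S`, produces a Lipschitz `p`-summing operator in the remaining
variables, with constant `(∏_{i ∈ S} ‖x⁰ᵢ‖)·c`. -/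
theorem lipschitzPSumming_fix_coordinates {n : ℕ} {X : Fin n → Type*}
    [∀ i, NormedAddCommGroup (X i)] [∀ i, NormedSpace ℝ (X i)] [∀ i, CompleteSpace (X i)]
    {Y : Type*} [NormedAddCommGroup Y] [NormedSpace ℝ Y] [CompleteSpace Y]
    (p : ℝ) (hp : 1 ≤ p) (c : ℝ) (hc : 0 ≤ c)
    (T : ContinuousMultilinearMap ℝ X Y) (hT : LipschitzPSumming p c T)
    (S : Finset (Fin n)) (hS : S ≠ Finset.univ) (x0 : (i : Fin n) → X i)
    (T' : ContinuousMultilinearMap ℝ (fun j : {i : Fin n // i ∉ S} => X j.1) Y)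
    (hT' : ∀ w : (j : {i : Fin n // i ∉ S}) → X j.1,
      T' w = T (fun i => if h : i ∈ S then x0 i else w ⟨i, h⟩)) :
    LipschitzPSumming p ((∏ i ∈ S, ‖x0 i‖) * c) T' ∧
      lipschitzPSummingNorm p T' ≤ (∏ i ∈ S, ‖x0 i‖) * lipschitzPSummingNorm p T := by
  set P : ℝ := ∏ i ∈ S, ‖x0 i‖ with hPdef
  have hP : 0 ≤ P := Finset.prod_nonneg fun i _ => norm_nonneg _
  refine ⟨lps_key p hp c hc T hT S x0 T' hT', ?_⟩
  set A : Set ℝ := {c : ℝ | 0 ≤ c ∧ LipschitzPSumming p c T} with hA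
  set A' : Set ℝ := {c : ℝ | 0 ≤ c ∧ LipschitzPSumming p c T'} with hA'
  have hAne : A.Nonempty := ⟨c, hc, hT⟩
  have hA'bdd : BddBelow A' := ⟨0, fun x hx => hx.1⟩
  have hmem : ∀ a ∈ A, P * a ∈ A' := fun a ha =>
    ⟨mul_nonneg hP ha.1, lps_key p hp a ha.1 T ha.2 S x0 T' hT'⟩
  show sInf A' ≤ P * sInf A
  rcases eq_or_lt_of_le hP with hP0 | hP0
  · have h0 : (0:ℝ) ∈ A' := by
      have := hmem c ⟨hc, hT⟩
      rwa [← hP0, zero_mul] at this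
    have h1 : sInf A' ≤ 0 := csInf_le hA'bdd h0
    have h2 : 0 ≤ P * sInf A := by
      rw [← hP0, zero_mul]
    exact h1.trans h2
  · have hdiv : sInf A' / P ≤ sInf A := by
      apply le_csInf hAne
      intro a ha
      rw [div_le_iff₀ hP0]
      calc sInf A' ≤ P * a := csInf_le hA'bdd (hmem a ha)
        _ = a * P := mul_comm _ _
    calc sInf A' = (sInf A' / P) * P := by field_simp
      _ ≤ sInf A * P := by gcongr
      _ = P * sInf A := mul_comm _ _
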